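/- arXiv:1606.02247 — 2 statements merged into one kernel-verified Lean document; each statement's English description precedes it below -/
import Mathlib

section
/- Let m ≥ 2, n = m(m−1)/2, and let (a_1, …, a_n) be any enumeration of the transvections {s_{i,j} : 1 ≤ i < j ≤ m} that is a Mal'cev basis of UT_m(ℤ). Write x_{i,j}, y_{i,j}, q_{i,j} for the variables and multiplication polynomials indexed by the basis position of s_{i,j}, and let q_{i,j} ∈ ℚ[x_{i,j}, y_{i,j} : 1 ≤ i < j ≤ m] be multiplication polynomials for this basis. Then for all 1 ≤ k < ℓ ≤ m, every monomial ω occurring with non-zero coefficient in q_{k,ℓ} has the following form: there exist d ≥ 1 and integers k = λ_0 < λ_1 < ⋯ < λ_d = ℓ such that ω = ∏_{ν=1}^{d} X_{λ_{ν−1}, λ_ν}, where each X_{i,j} is one of the two variables x_{i,j}, y_{i,j}. -/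
open scoped TensorProduct
open scoped commutatorElement

/-- diagonal entries of a product of two upper triangular matrices -/
private lemma diag_mul_triangular {m : ℕ} {A B : Matrix (Fin m) (Fin m) ℤ}
    (hA : ∀ i j : Fin m, j < i → A i j = 0) (hB : ∀ i j : Fin m, j < i → B i j = 0)
    (i : Fin m) : (A * B) i i = A i i * B i i := by
  rw [Matrix.mul_apply]
  apply Finset.sum_eq_single
  · intro k _ hk
    rcases lt_or_gt_of_ne hk with h | h
    · rw [hA i k h, zero_mul]
    · rw [hB k i h, mul_zero]
  · intro h; exact absurd (Finset.mem_univ i) h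

/-- The group of upper unitriangular `m × m` integer matrices, as a subgroup of the
units of the matrix ring. -/
def UT (m : ℕ) : Subgroup (Matrix (Fin m) (Fin m) ℤ)ˣ where
  carrier := {A | (∀ i j : Fin m, j < i → A.val i j = 0) ∧ ∀ i : Fin m, A.val i i = 1}
  one_mem' := by
    refine ⟨fun i j hji => ?_, fun i => ?_⟩
    · simp [Matrix.one_apply, (ne_of_lt hji).symm]
    · simp
  mul_mem' := by
    rintro A B ⟨hA1, hA2⟩ ⟨hB1, hB2⟩
    refine ⟨fun i j hji => ?_, fun i => ?_⟩
    · rw [Units.val_mul, Matrix.mul_apply]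
      apply Finset.sum_eq_zero
      intro k _
      rcases lt_or_ge k i with h | h
      · rw [hA1 i k h, zero_mul]
      · rw [hB1 k j (lt_of_lt_of_le hji h), mul_zero]
    · rw [Units.val_mul, diag_mul_triangular hA1 hB1, hA2, hB2, one_mul]
  inv_mem' := by
    rintro A ⟨hA1, hA2⟩
    have hinv : ∀ i j : Fin m, j < i → (A⁻¹).val i j = 0 := by
      haveI : Invertible A.val := A.isUnit.invertible
      have h1 : Matrix.BlockTriangular A.val (id : Fin m → Fin m) := fun i j h => hA1 i j h
      have h2 := Matrix.blockTriangular_inv_of_blockTriangular h1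
      intro i j hji
      rw [Matrix.coe_units_inv]
      exact h2 hji
    refine ⟨hinv, fun i => ?_⟩
    have h3 : ((A⁻¹).val * A.val) i i = (A⁻¹).val i i * A.val i i :=
      diag_mul_triangular hinv hA1 i
    rw [Units.inv_mul] at h3
    rw [hA2] at h3
    simpa [Matrix.one_apply] using h3.symm

/-- The transvection `s_{i,j} = 1 + E_{i,j}` as an element of `UT m`. -/
def sUT {m : ℕ} (i j : Fin m) (hij : i < j) : ↥(UT m) :=
  ⟨⟨Matrix.transvection i j (1 : ℤ), Matrix.transvection i j (-1 : ℤ),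
    by rw [Matrix.transvection_mul_transvection_same _ _ (ne_of_lt hij)]; simp,
    by rw [Matrix.transvection_mul_transvection_same _ _ (ne_of_lt hij)]; simp⟩,
   by
    constructor
    · intro a b hba
      show Matrix.transvection i j (1 : ℤ) a b = 0
      rw [Matrix.transvection, Matrix.add_apply, Matrix.one_apply,
        if_neg (ne_of_gt hba)]
      rw [Matrix.single_apply_of_ne]
      · ring
      · rintro ⟨rfl, rfl⟩
        exact absurd hij (not_lt_of_gt hba)
    · intro a
      show Matrix.transvection i j (1 : ℤ) a a = 1
      rw [Matrix.transvection, Matrix.add_apply, Matrix.one_apply, if_pos rfl]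
      rw [Matrix.single_apply_of_ne]
      · ring
      · rintro ⟨rfl, rfl⟩
        exact lt_irrefl _ hij⟩

/-- The set of index pairs `(i, j)` with `i < j`. -/
abbrev Pears (m : ℕ) := {p : Fin m × Fin m // p.1 < p.2}

/-- The ordered product `a 0 ^ x 0 * a 1 ^ x 1 * ⋯ * a (n-1) ^ x (n-1)`. -/
def malcevProd {G : Type*} [Group G] {n : ℕ} (a : Fin n → G) (x : Fin n → ℤ) : G :=
  ((List.finRange n).map fun i => a i ^ x i).prod

/-- `a` is a Mal'cev basis: normal forms are unique and the subgroups
`G_i = ⟨a_i, …, a_n⟩` form a central series. -/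
def IsMalcevBasis {G : Type*} [Group G] {n : ℕ} (a : Fin n → G) : Prop :=
  Function.Bijective (malcevProd a) ∧
    ∀ i : Fin n, ∀ g : G, ∀ h ∈ Subgroup.closure {y | ∃ j : Fin n, i ≤ j ∧ y = a j},
      ⁅g, h⁆ ∈ Subgroup.closure {y | ∃ j : Fin n, i < j ∧ y = a j}

/-!
Let `W_{ij}(t) = ∏_{i ≤ r < j} t_r` for `t ∈ ℤ^m`. Multiplying every entry `(i, j)` of an
upper unitriangular matrix by `W_{ij}(t)` is conjugation by `diag (∏_{r ≥ i} t_r)`; it is defined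
over `ℤ` because `W_{ik} W_{kj} = W_{ij}`, so it is an endomorphism of `UT_m(ℤ)`, and it sends
`s_{ij}^c` to `s_{ij}^{W_{ij} c}`. By uniqueness of Mal'cev coordinates,
`q_{kℓ}(W x, W y) = W_{kℓ} q_{kℓ}(x, y)` at all integer points, so `q_{kℓ}` is weighted
homogeneous of degree `1_{[k,ℓ)}` when `x_{ij}` and `y_{ij}` get weight `1_{[i,j)}`. A monomial
of that weight is a product of variables whose intervals `[i, j)` tile `[k, ℓ)` exactly, i.e. a
chain from `k` to `ℓ`.
-/

namespace MvPolynomial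

variable {σ ι R : Type*}

theorem eval_scale_monomial [CommSemiring R] (ω : σ → ι →₀ ℕ) (t : ι → R) (x : σ → R)
    (d : σ →₀ ℕ) (a : R) :
    eval (fun s => eval t (monomial (ω s) 1) * x s) (monomial d a) =
      eval t (monomial (Finsupp.weight ω d) 1) * eval x (monomial d a) := by
  rw [Finsupp.weight_apply, monomial_finsupp_sum_index, eval_mul, eval_C, one_mul,
    map_finsuppProd, eval_monomial, eval_monomial, mul_left_comm]
  have hpow (s : σ) (k : ℕ) :
      eval t (monomial (k • ω s) 1) = eval t (monomial (ω s) 1) ^ k := by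
    rw [← map_pow, monomial_pow, one_pow]
  simp only [mul_pow, Finsupp.prod_mul, hpow]

variable [CommRing R] [IsDomain R] [CharZero R]

theorem eq_zero_of_forall_eval_intCast_eq_zero {P : MvPolynomial σ R}
    (h : ∀ x : σ → ℤ, eval (fun s => (x s : R)) P = 0) : P = 0 := by
  refine funext_set (fun _ => Set.range ((↑) : ℤ → R))
    (fun _ => Set.infinite_range_of_injective Int.cast_injective) fun x hx => ?_
  choose y hy using fun s => hx s (Set.mem_univ s)
  rw [map_zero, ← h y]
  simp only [hy]

theorem isWeightedHomogeneous_of_forall_eval_scale (ω : σ → ι →₀ ℕ) (c : ι →₀ ℕ)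
    (P : MvPolynomial σ R)
    (h : ∀ (t : ι → ℤ) (x : σ → ℤ),
      eval (fun s => eval (fun r => (t r : R)) (monomial (ω s) 1) * x s) P =
        eval (fun r => (t r : R)) (monomial c 1) * eval (fun s => (x s : R)) P) :
    IsWeightedHomogeneous ω P c := by
  classical
  intro d hd
  by_contra hne
  suffices weightedHomogeneousComponent ω (Finsupp.weight ω d) P = 0 by
    simpa [coeff_weightedHomogeneousComponent, hd] using congrArg (coeff d) this
  refine eq_zero_of_forall_eval_intCast_eq_zero fun x => ?_
  -- For fixed `x`, both sides of `h` are polynomials in `t`; this is their difference.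
  set F : MvPolynomial ι R :=
    ∑ e ∈ P.support, C (eval (fun s => (x s : R)) (monomial e (coeff e P))) *
      monomial (Finsupp.weight ω e) 1 - C (eval (fun s => (x s : R)) P) * monomial c 1
  have hF : F = 0 := by
    refine eq_zero_of_forall_eval_intCast_eq_zero fun t => ?_
    have := h t x
    conv_lhs at this => rw [P.as_sum, map_sum]
    simp only [eval_scale_monomial] at this
    simp only [F, map_sub, map_sum, eval_mul, eval_C,
      mul_comm _ (eval (fun r => (t r : R)) _)]
    rw [this, sub_self]
  have := congrArg (coeff (Finsupp.weight ω d)) hF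
  rw [weightedHomogeneousComponent_apply, map_sum]
  simpa [F, coeff_sum, coeff_C_mul, coeff_monomial, Finset.sum_filter, Ne.symm hne]
    using this

end MvPolynomial

theorem Finsupp.exists_ne_zero_of_weight_apply_ne_zero {σ ι : Type*} {ω : σ → ι →₀ ℕ}
    {d : σ →₀ ℕ} {r : ι} (h : Finsupp.weight ω d r ≠ 0) : ∃ s, d s ≠ 0 ∧ ω s r ≠ 0 := by
  rw [Finsupp.weight_apply, Finsupp.sum_apply] at h
  obtain ⟨s, hs, hne⟩ := Finset.exists_ne_zero_of_sum_ne_zero h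
  exact ⟨s, Finsupp.mem_support_iff.1 hs, fun h0 => hne (by simp [h0])⟩

section Interval

variable {α : Type*} [LinearOrder α] [LocallyFiniteOrder α]

noncomputable def intervalWeight (i j : α) : α →₀ ℕ :=
  ∑ r ∈ Finset.Ico i j, Finsupp.single r 1

theorem intervalWeight_apply (i j r : α) :
    intervalWeight i j r = if i ≤ r ∧ r < j then 1 else 0 := by
  classical
  simp [intervalWeight, Finsupp.finsetSum_apply, Finsupp.single_apply]

@[simp]
theorem intervalWeight_self (i : α) : intervalWeight i i = 0 := by
  simp [intervalWeight]

theorem intervalWeight_add_intervalWeight {i k j : α} (hik : i ≤ k) (hkj : k ≤ j) :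
    intervalWeight i k + intervalWeight k j = intervalWeight i j := by
  classical
  rw [intervalWeight, intervalWeight,
    ← Finset.sum_union (Finset.Ico_disjoint_Ico_consecutive i k j),
    Finset.Ico_union_Ico_eq_Ico hik hkj, intervalWeight]

theorem exists_chain_of_weight_eq_intervalWeight {σ : Type*} (e : σ → α × α)
    (he : ∀ s, (e s).1 < (e s).2) {k ℓ : α} (hkℓ : k ≤ ℓ) {d : σ →₀ ℕ}
    (hd : Finsupp.weight (fun s => intervalWeight (e s).1 (e s).2) d = intervalWeight k ℓ) :
    ∃ (dd : ℕ) (lam : Fin (dd + 1) → α),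
      StrictMono lam ∧ lam 0 = k ∧ lam (Fin.last dd) = ℓ ∧
      ∃ X : Fin dd → σ, (∀ i, e (X i) = (lam i.castSucc, lam i.succ)) ∧
        d = ∑ i, Finsupp.single (X i) 1 := by
  induction hN : (Finset.Ico k ℓ).card using Nat.strong_induction_on generalizing k d with
  | _ N ih =>
  subst hN
  set ω := fun s => intervalWeight (e s).1 (e s).2
  rcases hkℓ.eq_or_lt with rfl | hlt
  · have hd0 : d = 0 := by
      by_contra hne
      obtain ⟨s, hs⟩ := Finsupp.ne_iff.1 hne
      have := DFunLike.congr_fun (Finsupp.weight_sub_single_add (w := ω) hs) (e s).1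
      simp [hd, ω, intervalWeight_apply, he s] at this
    exact ⟨0, fun _ => k, Fin.strictMono_iff_lt_succ.2 Fin.elim0, rfl, rfl, Fin.elim0,
      fun i => i.elim0, by simp [hd0]⟩
  -- The first edge of the chain is a variable whose interval covers `k`.
  obtain ⟨s, hs, hks⟩ : ∃ s, d s ≠ 0 ∧ ω s k ≠ 0 :=
    Finsupp.exists_ne_zero_of_weight_apply_ne_zero (by simp [hd, intervalWeight_apply, hlt])
  replace hks : (e s).1 ≤ k ∧ k < (e s).2 := by simpa [ω, intervalWeight_apply] using hks
  have hsplit := Finsupp.weight_sub_single_add (w := ω) hs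
  rw [hd] at hsplit
  have hfst : (e s).1 = k := by
    have := DFunLike.congr_fun hsplit (e s).1
    simp only [Finsupp.add_apply, ω, intervalWeight_apply, le_refl, he s, and_self] at this
    rw [if_pos trivial] at this
    split_ifs at this with h
    exact le_antisymm hks.1 h.1
  have hsnd : (e s).2 ≤ ℓ := by
    by_contra! h
    have := DFunLike.congr_fun hsplit ℓ
    simp [ω, intervalWeight_apply, hfst, hkℓ, h] at this
  have hd' : Finsupp.weight ω (d - Finsupp.single s 1) = intervalWeight (e s).2 ℓ := by
    refine add_right_cancel (b := ω s) ?_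
    rw [hsplit]
    show _ = _ + intervalWeight (e s).1 (e s).2
    rw [hfst, add_comm, intervalWeight_add_intervalWeight hks.2.le hsnd]
  have hcard : (Finset.Ico (e s).2 ℓ).card < (Finset.Ico k ℓ).card :=
    Finset.card_lt_card <| Finset.ssubset_iff_of_subset (Finset.Ico_subset_Ico_left hks.2.le)
      |>.2 ⟨k, by simp [hlt], by simp [hks.2]⟩
  obtain ⟨dd, lam, hmono, h0, hlast, X, hX, hdX⟩ := ih _ hcard hsnd hd' rfl
  refine ⟨dd + 1, Fin.cons k lam, ?_, rfl, ?_, Fin.cons s X, ?_, ?_⟩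
  · exact Fin.strictMono_cons.2
      ⟨fun j => hks.2.trans_le (h0 ▸ hmono.monotone (Fin.zero_le j)), hmono⟩
  · rw [← Fin.succ_last, Fin.cons_succ, hlast]
  · intro i
    cases i using Fin.cases with
    | zero => exact Prod.ext hfst h0.symm
    | succ j => simpa using hX j
  · rw [Fin.sum_univ_succ]
    simp only [Fin.cons_zero, Fin.cons_succ]
    rw [← hdX, add_comm, Finsupp.sub_add_single_one_cancel hs]

variable {R : Type*}

def intervalProd [CommMonoid R] (t : α → R) (i j : α) : R := ∏ r ∈ Finset.Ico i j, t r

theorem intervalProd_mul_intervalProd [CommMonoid R] (t : α → R) {i k j : α} (hik : i ≤ k)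
    (hkj : k ≤ j) : intervalProd t i k * intervalProd t k j = intervalProd t i j := by
  classical
  rw [intervalProd, intervalProd,
    ← Finset.prod_union (Finset.Ico_disjoint_Ico_consecutive i k j),
    Finset.Ico_union_Ico_eq_Ico hik hkj, intervalProd]

theorem MvPolynomial.eval_monomial_intervalWeight [CommSemiring R] (t : α → R) (i j : α) :
    eval t (monomial (intervalWeight i j) 1) = intervalProd t i j := by
  have hX (r : α) : monomial (Finsupp.single r 1) (1 : R) = X r := rfl
  simp [intervalWeight, intervalProd, monomial_sum_index, hX]

def scaleMat [CommSemiring R] (t : α → R) (A : Matrix α α R) : Matrix α α R :=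
  Matrix.of fun i j => intervalProd t i j * A i j

section ScaleMat

variable [CommSemiring R] (t : α → R)

theorem scaleMat_one [DecidableEq α] : scaleMat t (1 : Matrix α α R) = 1 := by
  ext i j
  by_cases h : i = j
  · subst h
    simp [scaleMat, intervalProd]
  · simp [scaleMat, Matrix.one_apply_ne h]

theorem scaleMat_mul [Fintype α] {A B : Matrix α α R} (hA : ∀ i j, j < i → A i j = 0)
    (hB : ∀ i j, j < i → B i j = 0) : scaleMat t (A * B) = scaleMat t A * scaleMat t B := by
  ext i j
  simp only [scaleMat, Matrix.of_apply, Matrix.mul_apply, Finset.mul_sum]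
  refine Finset.sum_congr rfl fun k _ => ?_
  rcases lt_or_ge k i with hki | hik
  · simp [hA i k hki]
  rcases lt_or_ge j k with hjk | hkj
  · simp [hB k j hjk]
  rw [← intervalProd_mul_intervalProd t hik hkj]
  ring

end ScaleMat

theorem scaleMat_transvection [CommRing R] [DecidableEq α] (t : α → R) (i j : α) (c : R) :
    scaleMat t (Matrix.transvection i j c) =
      Matrix.transvection i j (intervalProd t i j * c) := by
  ext a b
  simp only [scaleMat, Matrix.transvection, Matrix.of_apply, Matrix.add_apply, Matrix.one_apply,
    Matrix.single_apply]
  split_ifs <;> simp_all [intervalProd]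

end Interval

theorem sUT_zpow {m : ℕ} (i j : Fin m) (hij : i < j) (c : ℤ) :
    ((sUT i j hij ^ c).1 : Matrix (Fin m) (Fin m) ℤ) = Matrix.transvection i j c := by
  induction c using Int.induction_on with
  | zero => exact (Matrix.transvection_zero i j).symm
  | succ k ih =>
    rw [zpow_add_one, Subgroup.coe_mul, Units.val_mul, ih]
    exact Matrix.transvection_mul_transvection_same _ _ hij.ne _ 1
  | pred k ih =>
    rw [zpow_sub_one, Subgroup.coe_mul, Units.val_mul, ih, sub_eq_add_neg]
    exact Matrix.transvection_mul_transvection_same _ _ hij.ne _ (-1)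

noncomputable def scaleUT {m : ℕ} (t : Fin m → ℤ) : UT m →* UT m :=
  let f : UT m →* Matrix (Fin m) (Fin m) ℤ :=
    { toFun := fun A => scaleMat t (A.1 : Matrix (Fin m) (Fin m) ℤ)
      map_one' := scaleMat_one t
      map_mul' := fun A B => scaleMat_mul t A.2.1 B.2.1 }
  f.toHomUnits.codRestrict (UT m) fun A =>
    ⟨fun i j hji => by simp [f, scaleMat, A.2.1 i j hji],
     fun i => by simp [f, scaleMat, intervalProd, A.2.2 i]⟩

theorem scaleUT_sUT {m : ℕ} (t : Fin m → ℤ) (i j : Fin m) (hij : i < j) :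
    scaleUT t (sUT i j hij) = sUT i j hij ^ intervalProd t i j := by
  apply Subtype.ext
  apply Units.ext
  rw [sUT_zpow, ← mul_one (intervalProd t i j), ← scaleMat_transvection]
  rfl

section Malcev

variable {G : Type*} [Group G] {n : ℕ}

def IsMultiplicationPolynomials (a : Fin n → G) (q : Fin n → MvPolynomial (Fin n ⊕ Fin n) ℚ) :
    Prop :=
  ∀ x y : Fin n → ℤ, ∃ z : Fin n → ℤ,
    malcevProd a x * malcevProd a y = malcevProd a z ∧
    ∀ i : Fin n, (z i : ℚ) =
      MvPolynomial.eval (Sum.elim (fun j => (x j : ℚ)) fun j => (y j : ℚ)) (q i)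

theorem map_malcevProd {a : Fin n → G} (φ : G →* G) {w : Fin n → ℤ}
    (hφ : ∀ i, φ (a i) = a i ^ w i) (x : Fin n → ℤ) :
    φ (malcevProd a x) = malcevProd a (w * x) := by
  simp only [malcevProd, map_list_prod, List.map_map]
  congr 1
  refine List.map_congr_left fun i _ => ?_
  simp [hφ, zpow_mul]

theorem IsMultiplicationPolynomials.eval_scale {a : Fin n → G}
    {q : Fin n → MvPolynomial (Fin n ⊕ Fin n) ℚ} (hq : IsMultiplicationPolynomials a q)
    (hinj : Function.Injective (malcevProd a)) (φ : G →* G) {w : Fin n → ℤ}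
    (hφ : ∀ i, φ (a i) = a i ^ w i) (x y : Fin n → ℤ) (i : Fin n) :
    MvPolynomial.eval
        (Sum.elim (fun j => ((w j * x j : ℤ) : ℚ)) fun j => ((w j * y j : ℤ) : ℚ)) (q i) =
      w i * MvPolynomial.eval (Sum.elim (fun j => (x j : ℚ)) fun j => (y j : ℚ)) (q i) := by
  obtain ⟨z, hz, hzq⟩ := hq x y
  obtain ⟨z', hz', hz'q⟩ := hq (w * x) (w * y)
  have hz'z : z' = w * z := hinj <| by
    rw [← hz', ← map_malcevProd φ hφ, ← map_malcevProd φ hφ, ← map_mul, hz,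
      map_malcevProd φ hφ]
  have h := hz'q i
  rw [hz'z] at h
  rw [← hzq]
  simpa using h.symm

end Malcev

theorem isWeightedHomogeneous_multiplicationPolynomial_UT {m n : ℕ} {a : Fin n → UT m}
    (e : Pears m ≃ Fin n) (ha : ∀ p : Pears m, a (e p) = sUT p.1.1 p.1.2 p.2)
    (hinj : Function.Injective (malcevProd a)) {q : Fin n → MvPolynomial (Fin n ⊕ Fin n) ℚ}
    (hq : IsMultiplicationPolynomials a q) (p : Pears m) :
    MvPolynomial.IsWeightedHomogeneous
      (fun s => intervalWeight (e.symm (s.elim id id)).1.1 (e.symm (s.elim id id)).1.2)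
      (q (e p)) (intervalWeight p.1.1 p.1.2) := by
  refine MvPolynomial.isWeightedHomogeneous_of_forall_eval_scale _ _ _ fun t xy => ?_
  set w : Fin n → ℤ := fun i => intervalProd t (e.symm i).1.1 (e.symm i).1.2
  have hφ (i : Fin n) : scaleUT t (a i) = a i ^ w i := by
    obtain ⟨p, rfl⟩ := e.surjective i
    simp [w, ha, scaleUT_sUT]
  have := hq.eval_scale hinj (scaleUT t) hφ (xy ∘ Sum.inl) (xy ∘ Sum.inr) (e p)
  simp only [MvPolynomial.eval_monomial_intervalWeight]
  convert this using 2
  · congr 1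
    funext s
    rcases s with j | j <;> simp [w, intervalProd]
  · simp [w, intervalProd]
  · congr 2
    funext s
    rcases s with j | j <;> rfl

theorem monomial_shape_UT_general (m : ℕ) (n : ℕ)
    (a : Fin n → ↥(UT m)) (pos : Pears m → Fin n)
    (hposb : Function.Bijective pos)
    (ha : ∀ p : Pears m, a (pos p) = sUT p.1.1 p.1.2 p.2)
    (hmal : IsMalcevBasis a)
    (q : Fin n → MvPolynomial (Fin n ⊕ Fin n) ℚ)
    (hq : ∀ x y : Fin n → ℤ, ∃ z : Fin n → ℤ,
      malcevProd a x * malcevProd a y = malcevProd a z ∧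
      ∀ i : Fin n, (z i : ℚ) =
        MvPolynomial.eval (Sum.elim (fun j => (x j : ℚ)) fun j => (y j : ℚ)) (q i)) :
    ∀ p : Pears m, ∀ d ∈ (q (pos p)).support,
      ∃ (dd : ℕ) (_ : 1 ≤ dd) (lam : Fin (dd + 1) → Fin m) (hmono : StrictMono lam),
        lam 0 = p.1.1 ∧ lam (Fin.last dd) = p.1.2 ∧
        ∃ X : Fin dd → Fin n ⊕ Fin n,
          (∀ i : Fin dd,
            X i = Sum.inl (pos ⟨(lam i.castSucc, lam i.succ),
                    hmono (Fin.castSucc_lt_succ (i := i))⟩) ∨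
            X i = Sum.inr (pos ⟨(lam i.castSucc, lam i.succ),
                    hmono (Fin.castSucc_lt_succ (i := i))⟩)) ∧
          d = ∑ i : Fin dd, Finsupp.single (X i) 1 := by
  intro p d hd
  let e := Equiv.ofBijective pos hposb
  have hw := isWeightedHomogeneous_multiplicationPolynomial_UT e ha hmal.1.1 hq p
    (MvPolynomial.mem_support_iff.1 hd)
  obtain ⟨dd, lam, hmono, h0, hlast, X, hX, hdX⟩ :=
    exists_chain_of_weight_eq_intervalWeight (σ := Fin n ⊕ Fin n) (k := p.1.1) (ℓ := p.1.2)
      (fun s => (e.symm (s.elim id id)).1) (fun s => (e.symm (s.elim id id)).2) p.2.le hw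
  refine ⟨dd, Nat.one_le_iff_ne_zero.2 ?_, lam, hmono, h0, hlast, X, fun i => ?_, hdX⟩
  · rintro rfl
    exact p.2.ne (h0.symm.trans hlast)
  · have hXi : (X i).elim id id = pos ⟨_, hmono (Fin.castSucc_lt_succ (i := i))⟩ :=
      (e.apply_symm_apply _).symm.trans (congrArg e (Subtype.ext (hX i)))
    rcases hXi' : X i with j | j
    · exact Or.inl (by simpa [hXi'] using hXi)
    · exact Or.inr (by simpa [hXi'] using hXi)

theorem monomial_shape_UT (m : ℕ) (hm : 2 ≤ m)
    (n : ℕ) (hn : n = m * (m - 1) / 2)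
    (a : Fin n → ↥(UT m)) (pos : Pears m → Fin n)
    (hposb : Function.Bijective pos)
    (ha : ∀ p : Pears m, a (pos p) = sUT p.1.1 p.1.2 p.2)
    (hmal : IsMalcevBasis a)
    (q : Fin n → MvPolynomial (Fin n ⊕ Fin n) ℚ)
    (hq : ∀ x y : Fin n → ℤ, ∃ z : Fin n → ℤ,
      malcevProd a x * malcevProd a y = malcevProd a z ∧
      ∀ i : Fin n, (z i : ℚ) =
        MvPolynomial.eval (Sum.elim (fun j => (x j : ℚ)) fun j => (y j : ℚ)) (q i)) :
    ∀ p : Pears m, ∀ d ∈ (q (pos p)).support,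
      ∃ (dd : ℕ) (_ : 1 ≤ dd) (lam : Fin (dd + 1) → Fin m) (hmono : StrictMono lam),
        lam 0 = p.1.1 ∧ lam (Fin.last dd) = p.1.2 ∧
        ∃ X : Fin dd → Fin n ⊕ Fin n,
          (∀ i : Fin dd,
            X i = Sum.inl (pos ⟨(lam i.castSucc, lam i.succ),
                    hmono (Fin.castSucc_lt_succ (i := i))⟩) ∨
            X i = Sum.inr (pos ⟨(lam i.castSucc, lam i.succ),
                    hmono (Fin.castSucc_lt_succ (i := i))⟩)) ∧
          d = ∑ i : Fin dd, Finsupp.single (X i) 1 :=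
  monomial_shape_UT_general m n a pos hposb ha hmal q hq
end

section
/- Let m ≥ 2, n = m(m−1)/2, μ = ⌊m/2⌋, and consider UT_m(ℤ) with its standard Mal'cev basis and coordinate functions t_{i,j}. Then for every g ∈ UT_m(ℤ) and every pair 1 ≤ k < ℓ ≤ m there exists a polynomial P ∈ ℚ[x_{i,j} : 1 ≤ i < j ≤ m] such that (g • t_{k,ℓ})(h) = P((t_{i,j}(h))_{i<j}) for all h ∈ UT_m(ℤ), and every monomial of P that contains a variable x_{i,j} with j − i ≥ m − μ has total degree 1. -/
open scoped TensorProduct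
open scoped commutatorElement

/-!
Let `c = m - ⌊m/2⌋`, so that `2c ≥ m`. Call a pair `(i, j)` long if `j - i ≥ c`. Matrices
supported on the superdiagonals `c, c + 1, …` multiply to zero, so `N = 1 + {such matrices}` is an
abelian normal subgroup of `UT_m(ℤ)` in which `(1 + M)(1 + M') = 1 + M + M'`. The long
transvections come last in the Mal'cev order, hence `h = u (1 + L)`, where `u` has the short
coordinates of `h` and no long ones and `L` is the matrix of the long coordinates of `h`; and right
multiplication by `1 + M ∈ N` just adds the entries of `M` to the long coordinates. Thus
`t_{k,ℓ}(h g⁻¹) = t_{k,ℓ}(u g⁻¹ · g (1 + L) g⁻¹) = t_{k,ℓ}(u g⁻¹) + (g L g⁻¹)_{k,ℓ}`, and the last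
term is linear in the long coordinates of `h`.

For the first term: ordering pairs by `j - i`, the entries of `a_1^{x_1} ⋯ a_n^{x_n}` are
unitriangular polynomials in the `x`'s, so the coordinate functions and the matrix entries
generate the same algebra of functions on `UT_m(ℤ)`, which is stable under right translation.
Hence `h ↦ t_{k,ℓ}(h g⁻¹)` is a polynomial `P₀` in the coordinates, and `t_{k,ℓ}(u g⁻¹)` is `P₀`
with the long variables set to `0`.
-/

open MvPolynomial

def AlgHom.compRight (R A : Type*) [CommSemiring R] [Semiring A] [Algebra R A] {α β : Type*}
    (f : α → β) : (β → A) →ₐ[R] (α → A) :=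
  AlgHom.pi fun x => Pi.evalAlgHom R (fun _ => A) (f x)

@[simp]
lemma AlgHom.compRight_apply (R A : Type*) [CommSemiring R] [Semiring A] [Algebra R A]
    {α β : Type*} (f : α → β) (φ : β → A) : AlgHom.compRight R A f φ = φ ∘ f := rfl

lemma AlgHom.compRight_injective (R A : Type*) [CommSemiring R] [Semiring A] [Algebra R A]
    {α β : Type*} {f : α → β} (hf : f.Surjective) :
    Function.Injective (AlgHom.compRight R A f) :=
  hf.injective_comp_right

namespace MvPolynomial

lemma aeval_pi_apply {σ α R : Type*} [CommSemiring R] (f : σ → α → R)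
    (P : MvPolynomial σ R) (x : α) : aeval f P x = eval (fun i => f i x) P := by
  change Pi.evalAlgHom R (fun _ => R) x (aeval f P) = _
  rw [← AlgHom.comp_apply, comp_aeval]
  rfl

lemma eval_bind₁ {σ τ R : Type*} [CommSemiring R] (f : τ → R) (g : σ → MvPolynomial τ R)
    (P : MvPolynomial σ R) : eval f (bind₁ g P) = eval (fun i => eval f (g i)) P :=
  eval₂Hom_bind₁ _ _ _ _

lemma not_of_mem_vars_bind₁_ite {σ R : Type*} [CommSemiring R] (p : σ → Prop) [DecidablePred p]
    (P : MvPolynomial σ R) : ∀ i ∈ (bind₁ (fun j => if p j then 0 else X j) P).vars, ¬ p i := by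
  classical
  intro i hi
  obtain ⟨j, -, hij⟩ := mem_vars_bind₁ _ _ hi
  split_ifs at hij with hj
  · simp at hij
  · obtain ⟨d, hd, hid⟩ := (mem_vars_iff_mem_support i).mp hij
    change d ∈ (monomial (Finsupp.single j 1) (1 : R)).support at hd
    rw [Finset.mem_singleton.mp (support_monomial_subset hd)] at hid
    rwa [Finset.mem_singleton.mp (Finsupp.support_single_subset hid)]

lemma degree_eq_one_of_mem_support_add {σ R : Type*} [CommSemiring R] {Q Λ : MvPolynomial σ R}
    {p : σ → Prop} (hQ : ∀ i ∈ Q.vars, ¬ p i) (hΛ : Λ.IsHomogeneous 1) {d : σ →₀ ℕ}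
    (hd : d ∈ (Q + Λ).support) (hdp : ∃ i, d i ≠ 0 ∧ p i) : d.degree = 1 := by
  classical
  obtain ⟨i, hdi, hi⟩ := hdp
  rcases Finset.mem_union.mp (support_add hd) with hdQ | hdΛ
  · exact absurd hi
      (hQ i ((mem_vars_iff_mem_support i).mpr ⟨d, hdQ, Finsupp.mem_support_iff.mpr hdi⟩))
  · rw [Finsupp.degree_eq_weight_one]
    exact hΛ (mem_support_iff.mp hdΛ)

end MvPolynomial

lemma List.prod_map_one_add_eq {R : Type*} [Ring R] (S : AddSubmonoid R)
    (hS : ∀ x ∈ S, ∀ y ∈ S, x * y = 0) (l : List R) (hl : ∀ x ∈ l, x ∈ S) :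
    (l.map (1 + ·)).prod = 1 + l.sum := by
  induction l with
  | nil => simp
  | cons x l ih =>
    have hx : x ∈ S := hl x List.mem_cons_self
    have hsum : l.sum ∈ S := S.list_sum_mem fun y hy => hl y (List.mem_cons_of_mem x hy)
    rw [List.map_cons, List.prod_cons, ih fun y hy => hl y (List.mem_cons_of_mem x hy),
      List.sum_cons, add_mul, one_mul, mul_add, mul_one, hS x hx _ hsum]
    abel

def partialMalcevProd {G : Type*} [Group G] {n : ℕ} (a : Fin n → G) (L : List (Fin n))
    (x : Fin n → ℤ) : G :=
  (L.map fun j => a j ^ x j).prod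

lemma malcevProd_eq_mul {G : Type*} [Group G] {n : ℕ} (a : Fin n → G) (x : Fin n → ℤ)
    (k : ℕ) : malcevProd a x =
      malcevProd a (fun j => if k ≤ (j : ℕ) then 0 else x j) *
        malcevProd a (fun j => if k ≤ (j : ℕ) then x j else 0) := by
  set head := (List.finRange n).take k
  set tail := (List.finRange n).drop k
  have split (y : Fin n → ℤ) : malcevProd a y =
      (head.map fun j => a j ^ y j).prod * (tail.map fun j => a j ^ y j).prod := by
    rw [← List.prod_append, ← List.map_append, List.take_append_drop]
    rfl
  have mem_head (j) (hj : j ∈ head) : ¬ k ≤ (j : ℕ) := by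
    simpa [head, List.mem_take_iff_getElem, Fin.ext_iff] using hj
  have mem_tail (j) (hj : j ∈ tail) : k ≤ (j : ℕ) := by
    obtain ⟨i, hi, rfl⟩ := List.mem_drop_iff_getElem.mp hj
    simp
  have short_tail : (tail.map fun j => a j ^ if k ≤ (j : ℕ) then 0 else x j).prod = 1 := by
    refine List.prod_eq_one fun g hg => ?_
    obtain ⟨j, hj, rfl⟩ := List.mem_map.mp hg
    rw [if_pos (mem_tail j hj), zpow_zero]
  have long_head : (head.map fun j => a j ^ if k ≤ (j : ℕ) then x j else 0).prod = 1 := by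
    refine List.prod_eq_one fun g hg => ?_
    obtain ⟨j, hj, rfl⟩ := List.mem_map.mp hg
    rw [if_neg (mem_head j hj), zpow_zero]
  rw [split x, split, split, short_tail, long_head, mul_one, one_mul]
  congr 2 <;> refine List.map_congr_left fun j hj => ?_
  · rw [if_neg (mem_head j hj)]
  · rw [if_pos (mem_tail j hj)]

namespace Matrix

variable {R : Type*} [Semiring R] {m : ℕ}

def superdiagFrom (R : Type*) [Semiring R] (m c : ℕ) : Submodule R (Matrix (Fin m) (Fin m) R) where
  carrier := {M | ∀ i j : Fin m, (j : ℕ) < i + c → M i j = 0}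
  add_mem' hM hN i j h := by simp [hM i j h, hN i j h]
  zero_mem' _ _ _ := rfl
  smul_mem' r M hM i j h := by simp [hM i j h]

lemma mul_mem_superdiagFrom {c d : ℕ} {M N : Matrix (Fin m) (Fin m) R}
    (hM : M ∈ superdiagFrom R m c) (hN : N ∈ superdiagFrom R m d) :
    M * N ∈ superdiagFrom R m (c + d) := by
  intro i j hij
  rw [mul_apply]
  refine Finset.sum_eq_zero fun k _ => ?_
  by_cases hk : (k : ℕ) < i + c
  · rw [hM i k hk, zero_mul]
  · rw [hN k j (by omega), mul_zero]

lemma eq_zero_of_mem_superdiagFrom {c : ℕ} (hc : m ≤ c) {M : Matrix (Fin m) (Fin m) R}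
    (hM : M ∈ superdiagFrom R m c) : M = 0 := by
  ext i j
  exact hM i j (by omega)

lemma mul_eq_zero_of_mem_superdiagFrom {c d : ℕ} (hcd : m ≤ c + d) {M N : Matrix (Fin m) (Fin m) R}
    (hM : M ∈ superdiagFrom R m c) (hN : N ∈ superdiagFrom R m d) : M * N = 0 :=
  eq_zero_of_mem_superdiagFrom hcd (mul_mem_superdiagFrom hM hN)

lemma single_mem_superdiagFrom {c : ℕ} {i j : Fin m} (hij : (i : ℕ) + c ≤ j) (r : R) :
    single i j r ∈ superdiagFrom R m c := by
  intro k l hkl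
  rw [single_apply_of_ne]
  rintro ⟨rfl, rfl⟩
  omega

end Matrix

namespace Pears

variable {m : ℕ}

def gap (p : Pears m) : ℕ := p.1.2 - p.1.1

lemma fst_add_gap (p : Pears m) : (p.1.1 : ℕ) + p.gap = p.1.2 := by
  have : p.1.1 < p.1.2 := p.2
  unfold gap
  omega

lemma gap_lt_gap_of_fst_eq {p q : Pears m} (h1 : p.1.1 = q.1.1) (h2 : p.1.2 < q.1.2) :
    p.gap < q.gap := by
  have := p.fst_add_gap
  have := q.fst_add_gap
  have : (p.1.1 : ℕ) = q.1.1 := congrArg Fin.val h1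
  have : (p.1.2 : ℕ) < q.1.2 := h2
  omega

lemma gap_lt_gap_of_snd_eq {p q : Pears m} (h1 : q.1.1 < p.1.1) (h2 : p.1.2 = q.1.2) :
    p.gap < q.gap := by
  have := p.fst_add_gap
  have := q.fst_add_gap
  have : (q.1.1 : ℕ) < p.1.1 := h1
  have : (p.1.2 : ℕ) = q.1.2 := congrArg Fin.val h2
  omega

def IsLong (p : Pears m) : Prop := m - m / 2 ≤ p.gap

instance : DecidablePred (@IsLong m) := fun p => inferInstanceAs (Decidable (m - m / 2 ≤ p.gap))

lemma isLong_iff_add_le (p : Pears m) : p.IsLong ↔ (p.1.1 : ℕ) + (m - m / 2) ≤ p.1.2 := by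
  have := p.fst_add_gap
  unfold IsLong
  omega

/-- The number of entries on the superdiagonals `1, …, g - 1` of an `m × m` matrix. -/
def superdiagOffset (m g : ℕ) : ℕ := ∑ ℓ ∈ Finset.Ico 1 g, (m - ℓ)

lemma superdiagOffset_mono {g g' : ℕ} (h : g ≤ g') : superdiagOffset m g ≤ superdiagOffset m g' :=
  Finset.sum_le_sum_of_subset (Finset.Ico_subset_Ico le_rfl h)

/-- The index of `s_{i,j}` in the Mal'cev basis, counted from `0`. -/
def malcevIndex (p : Pears m) : ℕ := p.1.1 + superdiagOffset m p.gap

lemma malcevIndex_lt_superdiagOffset_iff (p : Pears m) (g : ℕ) :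
    p.malcevIndex < superdiagOffset m g ↔ p.gap < g := by
  have hgap := p.fst_add_gap
  have hlt := p.1.2.isLt
  constructor
  · intro h
    by_contra! hg
    have := superdiagOffset_mono (m := m) hg
    unfold malcevIndex at h
    omega
  · intro hg
    have hstep : superdiagOffset m (p.gap + 1) = superdiagOffset m p.gap + (m - p.gap) :=
      Finset.sum_Ico_succ_top (by have := p.2; unfold gap; omega) _
    have := superdiagOffset_mono (m := m) (show p.gap + 1 ≤ g from hg)
    unfold malcevIndex
    omega

lemma card : Fintype.card (Pears m) = m * (m - 1) / 2 := by
  rw [Fintype.card_subtype, Fintype.card_product_filter_lt, Fintype.card_fin,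
    Nat.choose_two_right]

lemma malcevIndex_injective : Function.Injective (malcevIndex : Pears m → ℕ) := by
  have gap_le (p q : Pears m) (h : p.malcevIndex = q.malcevIndex) : p.gap ≤ q.gap :=
    Nat.lt_succ_iff.mp ((malcevIndex_lt_superdiagOffset_iff p _).mp
      (h ▸ (malcevIndex_lt_superdiagOffset_iff q _).mpr q.gap.lt_succ_self))
  intro p q h
  have hgap := le_antisymm (gap_le p q h) (gap_le q p h.symm)
  have hfst : (p.1.1 : ℕ) = q.1.1 := by
    unfold malcevIndex at h
    rw [hgap] at h
    omega
  have := p.fst_add_gap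
  have := q.fst_add_gap
  exact Subtype.ext (Prod.ext (Fin.ext hfst) (Fin.ext (by omega)))

lemma bijective_of_val_eq_malcevIndex {n : ℕ} (hn : n = m * (m - 1) / 2) {pos : Pears m → Fin n}
    (hpos : ∀ p, (pos p : ℕ) = p.malcevIndex) : Function.Bijective pos := by
  refine (Fintype.bijective_iff_injective_and_card pos).mpr ⟨fun p q h => ?_, ?_⟩
  · exact malcevIndex_injective ((hpos p).symm.trans ((congrArg Fin.val h).trans (hpos q)))
  · rw [card, Fintype.card_fin, hn]

lemma isLong_iff_le_malcevIndex (p : Pears m) :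
    p.IsLong ↔ superdiagOffset m (m - m / 2) ≤ p.malcevIndex := by
  rw [IsLong, ← not_lt, ← malcevIndex_lt_superdiagOffset_iff, not_lt]

section Algebra

variable {A : Type*} [CommRing A] [Algebra ℚ A]

def adjoinGapLT (f : Pears m → A) (d : ℕ) : Subalgebra ℚ A :=
  Algebra.adjoin ℚ (f '' {p | p.gap < d})

lemma mem_adjoinGapLT (f : Pears m → A) {p : Pears m} {d : ℕ} (hp : p.gap < d) :
    f p ∈ adjoinGapLT f d :=
  Algebra.subset_adjoin ⟨p, hp, rfl⟩

lemma adjoinGapLT_mono (f : Pears m → A) {d d' : ℕ} (h : d ≤ d') :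
    adjoinGapLT f d ≤ adjoinGapLT f d' :=
  Algebra.adjoin_mono (Set.image_mono fun _ hp => lt_of_lt_of_le hp h)

lemma mem_adjoinGapLT_succ_of_sub_mem {f : Pears m → A} {q : Pears m} {b : Prop} [Decidable b]
    {g : A} (h : g - (if b then f q else 0) ∈ adjoinGapLT f q.gap) :
    g ∈ adjoinGapLT f (q.gap + 1) := by
  have hite : (if b then f q else 0) ∈ adjoinGapLT f (q.gap + 1) := by
    split_ifs
    exacts [mem_adjoinGapLT f q.gap.lt_succ_self, zero_mem _]
  simpa using add_mem (adjoinGapLT_mono f q.gap.le_succ h) hite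

lemma map_adjoinGapLT {B : Type*} [CommRing B] [Algebra ℚ B] (φ : A →ₐ[ℚ] B)
    (f : Pears m → A) (d : ℕ) : (adjoinGapLT f d).map φ = adjoinGapLT (φ ∘ f) d := by
  rw [adjoinGapLT, AlgHom.map_adjoin, ← Set.image_comp, adjoinGapLT]

end Algebra

section LongMat

open Matrix

def longMat (z : Pears m → ℤ) : Matrix (Fin m) (Fin m) ℤ :=
  ∑ p with p.IsLong, single p.1.1 p.1.2 (z p)

lemma longMat_mem_superdiagFrom (z : Pears m → ℤ) :
    longMat z ∈ superdiagFrom ℤ m (m - m / 2) :=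
  Submodule.sum_mem _ fun p hp =>
    single_mem_superdiagFrom (p.isLong_iff_add_le.mp (Finset.mem_filter.mp hp).2) _

lemma longMat_add (z w : Pears m → ℤ) : longMat (z + w) = longMat z + longMat w := by
  simp only [longMat, Pi.add_apply, single_add, Finset.sum_add_distrib]

lemma longMat_entries {M : Matrix (Fin m) (Fin m) ℤ} (hM : M ∈ superdiagFrom ℤ m (m - m / 2)) :
    longMat (fun p => M p.1.1 p.1.2) = M := by
  ext i k
  rw [longMat, Matrix.sum_apply]
  by_cases hik : (k : ℕ) < i + (m - m / 2)
  · rw [hM i k hik]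
    refine Finset.sum_eq_zero fun p hp => single_apply_of_ne _ _ _ _ _ ?_
    rintro ⟨rfl, rfl⟩
    have := p.isLong_iff_add_le.mp (Finset.mem_filter.mp hp).2
    omega
  · have hlt : i < k := Fin.lt_def.mpr (by have := i.isLt; omega)
    let q : Pears m := ⟨(i, k), hlt⟩
    have hq : q.IsLong := show m - m / 2 ≤ (k : ℕ) - i by omega
    rw [Finset.sum_eq_single q (fun p _ hp => single_apply_of_ne _ _ _ _ _ fun h =>
      hp (Subtype.ext (Prod.ext h.1 h.2))) (fun h => absurd (by simpa using hq) h)]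
    simp [q]

end LongMat

end Pears

namespace UT

open Matrix

variable {m : ℕ}

def mat : UT m →* Matrix (Fin m) (Fin m) ℤ := (Units.coeHom _).comp (UT m).subtype

lemma mat_injective : Function.Injective (mat : UT m →* _) :=
  fun _ _ h => Subtype.ext (Units.ext h)

lemma mat_apply_of_lt (h : UT m) {i j : Fin m} (hji : j < i) : mat h i j = 0 := h.2.1 i j hji

lemma mat_apply_self (h : UT m) (i : Fin m) : mat h i i = 1 := h.2.2 i

lemma mat_mem_superdiagFrom_zero (h : UT m) : mat h ∈ superdiagFrom ℤ m 0 :=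
  fun _ _ hji => mat_apply_of_lt h (Fin.lt_def.mpr (by simpa using hji))

lemma mat_sUT_zpow {i j : Fin m} (hij : i < j) (z : ℤ) :
    mat (sUT i j hij ^ z) = transvection i j z := by
  have hmul (c d : ℤ) : transvection i j c * transvection i j d = transvection i j (c + d) :=
    transvection_mul_transvection_same i j hij.ne c d
  induction z using Int.induction_on with
  | zero => rw [zpow_zero, map_one, transvection_zero]
  | succ k ih =>
    rw [_root_.zpow_add_one, map_mul, ih]
    exact hmul _ 1
  | pred k ih =>
    rw [_root_.zpow_sub_one, map_mul, ih]
    exact (hmul _ (-1)).trans (by rw [sub_eq_add_neg])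

def entry (i j : Fin m) : UT m → ℚ := fun h => (mat h i j : ℚ)

def entryAlg (m : ℕ) : Subalgebra ℚ (UT m → ℚ) :=
  Algebra.adjoin ℚ (Set.range fun p : Pears m => entry p.1.1 p.1.2)

lemma entry_mem_entryAlg (i j : Fin m) : entry i j ∈ entryAlg m := by
  rcases lt_trichotomy i j with h | rfl | h
  · exact Algebra.subset_adjoin ⟨⟨(i, j), h⟩, rfl⟩
  · convert one_mem (entryAlg m)
    funext h
    simp [entry, mat_apply_self]
  · convert zero_mem (entryAlg m)
    funext g
    simp [entry, mat_apply_of_lt _ h]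

lemma map_compRight_mul_entryAlg_le (g : UT m) :
    (entryAlg m).map (AlgHom.compRight ℚ ℚ (· * g)) ≤ entryAlg m := by
  rw [entryAlg, AlgHom.map_adjoin, Algebra.adjoin_le_iff]
  rintro _ ⟨_, ⟨p, rfl⟩, rfl⟩
  have hright : AlgHom.compRight ℚ ℚ (· * g) (entry p.1.1 p.1.2) =
      ∑ k, (mat g k p.1.2 : ℚ) • entry p.1.1 k := by
    funext h
    simp [entry, Matrix.mul_apply, mul_comm]
  rw [hright]
  exact Subalgebra.sum_mem _ fun k _ => Subalgebra.smul_mem _ (entry_mem_entryAlg _ _) _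

end UT

section Malcev

open Matrix Pears UT

variable {m n : ℕ} (e : Pears m ≃ Fin n) {a : Fin n → UT m}
  (ha : ∀ p : Pears m, a (e p) = sUT p.1.1 p.1.2 p.2)

lemma malcevProd_eq_short_mul_long {n₀ : ℕ} (he : ∀ p : Pears m, p.IsLong ↔ n₀ ≤ e p)
    (x : Fin n → ℤ) : malcevProd a x =
      malcevProd a (fun j => if (e.symm j).IsLong then 0 else x j) *
        malcevProd a (fun j => if (e.symm j).IsLong then x j else 0) := by
  simp_rw [he, e.apply_symm_apply]
  exact malcevProd_eq_mul a x n₀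

def exponentFn (p : Pears m) : (Fin n → ℤ) → ℚ := fun x => (x (e p) : ℚ)

include ha

lemma mat_basis_zpow (j : Fin n) (z : ℤ) :
    mat (a j ^ z) = transvection (e.symm j).1.1 (e.symm j).1.2 z := by
  rw [← e.apply_symm_apply j, ha, mat_sUT_zpow, e.symm_apply_apply]

lemma mat_basis_zpow_mul_apply (j : Fin n) (z : ℤ) (h : UT m) (i k : Fin m) :
    mat (a j ^ z * h) i k = mat h i k +
      if (e.symm j).1.1 = i then z * mat h (e.symm j).1.2 k else 0 := by
  rw [map_mul, mat_basis_zpow e ha]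
  split_ifs with hi
  · rw [← hi, transvection_mul_apply_same]
  · rw [transvection_mul_apply_of_ne _ _ _ _ (Ne.symm hi), add_zero]

/-- The entries of a Mal'cev word are unitriangular polynomials in its exponents, with respect to
the gap `j - i`. -/
lemma entry_partialMalcevProd_sub_mem (L : List (Fin n)) (hL : L.Nodup) (q : Pears m) :
    (fun x => (mat (partialMalcevProd a L x) q.1.1 q.1.2 : ℚ)) -
        (if e q ∈ L then exponentFn e q else 0) ∈ adjoinGapLT (exponentFn e) q.gap := by
  induction L generalizing q with
  | nil =>
    convert zero_mem (adjoinGapLT (exponentFn e) q.gap)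
    simp [partialMalcevProd, q.2.ne]
    rfl
  | cons j L ih =>
    obtain ⟨hjL, hL⟩ := List.nodup_cons.mp hL
    set F : Fin m → Fin m → (Fin n → ℤ) → ℚ := fun i k x => (mat (partialMalcevProd a L x) i k : ℚ)
    set r := e.symm j
    have hj : e r = j := e.apply_symm_apply j
    have hcons : (fun x => (mat (partialMalcevProd a (j :: L) x) q.1.1 q.1.2 : ℚ)) =
        F q.1.1 q.1.2 + if r.1.1 = q.1.1 then exponentFn e r * F r.1.2 q.1.2 else 0 := by
      funext x
      change (mat (a j ^ x j * partialMalcevProd a L x) q.1.1 q.1.2 : ℚ) = _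
      rw [mat_basis_zpow_mul_apply e ha]
      split_ifs <;> simp [F, exponentFn, r]
    by_cases hqr : q = r
    · subst hqr
      convert ih hL r using 1
      rw [hcons, if_pos rfl, if_pos (hj ▸ List.mem_cons_self), if_neg (hj ▸ hjL)]
      have hdiag : F r.1.2 r.1.2 = 1 := funext fun x => by simp [F, mat_apply_self]
      rw [hdiag, mul_one, add_sub_cancel_right, sub_zero]
    have hmem : e q ∈ j :: L ↔ e q ∈ L := by
      rw [List.mem_cons, ← hj, e.injective.eq_iff, or_iff_right hqr]
    have hextra : (if r.1.1 = q.1.1 then exponentFn e r * F r.1.2 q.1.2 else 0) ∈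
        adjoinGapLT (exponentFn e) q.gap := by
      split_ifs with h1
      · rcases lt_trichotomy r.1.2 q.1.2 with h2 | h2 | h2
        · let s : Pears m := ⟨(r.1.2, q.1.2), h2⟩
          have hsq : s.gap < q.gap := gap_lt_gap_of_snd_eq (h1 ▸ r.2) rfl
          exact mul_mem (mem_adjoinGapLT _ (gap_lt_gap_of_fst_eq h1 h2))
            (adjoinGapLT_mono _ hsq (mem_adjoinGapLT_succ_of_sub_mem (ih hL s)))
        · exact absurd (Subtype.ext (Prod.ext h1 h2)).symm hqr
        · have hzero : F r.1.2 q.1.2 = 0 := funext fun x => by simp [F, mat_apply_of_lt _ h2]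
          rw [hzero, mul_zero]
          exact zero_mem _
      · exact zero_mem _
    rw [hcons, if_congr hmem rfl rfl, add_sub_right_comm]
    exact add_mem (ih hL q) hextra

lemma mat_malcevProd_long (x : Fin n → ℤ) :
    mat (malcevProd a (fun j => if (e.symm j).IsLong then x j else 0)) = 1 + longMat (x ∘ e) := by
  let N : Fin n → Matrix (Fin m) (Fin m) ℤ := fun j =>
    single (e.symm j).1.1 (e.symm j).1.2 (if (e.symm j).IsLong then x j else 0)
  have hN : ∀ j, N j ∈ superdiagFrom ℤ m (m - m / 2) := by
    intro j
    by_cases hj : (e.symm j).IsLong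
    · exact single_mem_superdiagFrom ((e.symm j).isLong_iff_add_le.mp hj) _
    · simp only [N, if_neg hj, single_zero]
      exact zero_mem _
  have hprod : mat (malcevProd a (fun j => if (e.symm j).IsLong then x j else 0)) =
      (((List.finRange n).map N).map (1 + ·)).prod := by
    rw [malcevProd, map_list_prod, List.map_map, List.map_map]
    congr 1
    refine List.map_congr_left fun j _ => ?_
    simp only [Function.comp_apply, mat_basis_zpow e ha, N]
    rfl
  rw [hprod, List.prod_map_one_add_eq (superdiagFrom ℤ m (m - m / 2)).toAddSubmonoid
    (fun _ hM _ hN => mul_eq_zero_of_mem_superdiagFrom (by omega) hM hN) _ (by simpa using hN),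
    ← Fin.sum_univ_def, ← e.sum_comp, longMat, Finset.sum_filter]
  simp only [N, e.symm_apply_apply, Function.comp_apply]
  congr 1
  refine Finset.sum_congr rfl fun p _ => ?_
  split_ifs <;> simp

end Malcev

section Polynomiality

open Pears UT

variable {m n : ℕ} (e : Pears m ≃ Fin n)
  {a : Fin n → UT m} (ha : ∀ p : Pears m, a (e p) = sUT p.1.1 p.1.2 p.2)
  {t : Fin n → UT m → ℚ} (ht : ∀ (x : Fin n → ℤ) (k : Fin n), t k (malcevProd a x) = (x k : ℚ))
  (hsurj : Function.Surjective (malcevProd a))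

include ha ht hsurj

lemma entry_sub_coord_mem (q : Pears m) :
    entry q.1.1 q.1.2 - t (e q) ∈ adjoinGapLT (fun p => t (e p)) q.gap := by
  let Φ := AlgHom.compRight ℚ ℚ (malcevProd a)
  have hΦ : Φ ∘ (fun p => t (e p)) = exponentFn e := funext fun p => funext fun x => ht x (e p)
  have hmem := entry_partialMalcevProd_sub_mem e ha (List.finRange n) (List.nodup_finRange n) q
  rw [← hΦ, ← map_adjoinGapLT] at hmem
  obtain ⟨f, hf, hfΦ⟩ := Subalgebra.mem_map.mp hmem
  convert hf
  refine AlgHom.compRight_injective ℚ ℚ hsurj (hfΦ.trans ?_).symm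
  funext x
  rw [if_pos (List.mem_finRange _)]
  simp only [Φ, AlgHom.compRight_apply, Function.comp_apply, Pi.sub_apply, entry, ht]
  rfl

lemma coord_mem_entryAlg (q : Pears m) : t (e q) ∈ entryAlg m := by
  induction hd : q.gap using Nat.strong_induction_on generalizing q with
  | _ d ih =>
    have hle : adjoinGapLT (fun p => t (e p)) q.gap ≤ entryAlg m :=
      Algebra.adjoin_le (by rintro _ ⟨p, hp, rfl⟩; exact ih p.gap (hd ▸ hp) p rfl)
    simpa using sub_mem (entry_mem_entryAlg q.1.1 q.1.2) (hle (entry_sub_coord_mem e ha ht hsurj q))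

lemma entryAlg_le_adjoin_coord : entryAlg m ≤ Algebra.adjoin ℚ (Set.range fun p => t (e p)) := by
  rw [entryAlg, Algebra.adjoin_le_iff]
  rintro _ ⟨q, rfl⟩
  have hcoord : t (e q) ∈ Algebra.adjoin ℚ (Set.range fun p => t (e p)) :=
    Algebra.subset_adjoin ⟨q, rfl⟩
  have hdiff :=
    Algebra.adjoin_mono (Set.image_subset_range _ _) (entry_sub_coord_mem e ha ht hsurj q)
  simpa using add_mem hdiff hcoord

theorem exists_coord_mul_eq_eval (g : UT m) (q : Pears m) :
    ∃ P : MvPolynomial (Pears m) ℚ, ∀ h, t (e q) (h * g) = eval (fun p => t (e p) h) P := by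
  have hmem : AlgHom.compRight ℚ ℚ (· * g) (t (e q)) ∈
      Algebra.adjoin ℚ (Set.range fun p => t (e p)) :=
    entryAlg_le_adjoin_coord e ha ht hsurj
      (map_compRight_mul_entryAlg_le g ⟨_, coord_mem_entryAlg e ha ht hsurj q, rfl⟩)
  rw [Algebra.adjoin_range_eq_range_aeval] at hmem
  obtain ⟨P, hP⟩ := hmem
  exact ⟨P, fun h => by rw [← aeval_pi_apply]; exact (congrFun hP h).symm⟩

end Polynomiality

section LongCoordinates

open Matrix Pears UT

variable {m n : ℕ} (e : Pears m ≃ Fin n) {n₀ : ℕ} (he : ∀ p : Pears m, p.IsLong ↔ n₀ ≤ e p)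
  {a : Fin n → UT m} (ha : ∀ p : Pears m, a (e p) = sUT p.1.1 p.1.2 p.2)
  {t : Fin n → UT m → ℚ} (ht : ∀ (x : Fin n → ℤ) (k : Fin n), t k (malcevProd a x) = (x k : ℚ))
  (hsurj : Function.Surjective (malcevProd a))

include he ha ht hsurj

lemma coord_mul_of_mem_superdiagFrom (w ξ : UT m) {M : Matrix (Fin m) (Fin m) ℤ}
    (hξ : mat ξ = 1 + M) (hM : M ∈ superdiagFrom ℤ m (m - m / 2)) (q : Pears m) :
    t (e q) (w * ξ) = t (e q) w + M q.1.1 q.1.2 := by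
  obtain ⟨y, rfl⟩ := hsurj w
  set δ : Fin n → ℤ := fun j => M (e.symm j).1.1 (e.symm j).1.2
  have hshort (j) (hj : ¬ (e.symm j).IsLong) : δ j = 0 :=
    hM _ _ (not_le.mp (mt (e.symm j).isLong_iff_add_le.mpr hj))
  have hprod : malcevProd a (y + δ) = malcevProd a y * ξ := by
    apply mat_injective
    rw [malcevProd_eq_short_mul_long e he (y + δ), malcevProd_eq_short_mul_long e he y, map_mul,
      map_mul, map_mul, mat_malcevProd_long e ha, mat_malcevProd_long e ha, hξ, mul_assoc]
    congr 3
    · funext j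
      split_ifs with hj
      · rfl
      · rw [Pi.add_apply, hshort j hj, add_zero]
    · have hδ : δ ∘ e = fun p => M p.1.1 p.1.2 := funext fun p => by simp [δ]
      rw [Pi.add_comp, longMat_add, hδ, longMat_entries hM, mul_add, add_mul, add_mul, one_mul,
        mul_one, one_mul, add_assoc,
        mul_eq_zero_of_mem_superdiagFrom (by omega) (longMat_mem_superdiagFrom _) hM, add_zero]
  rw [← hprod, ht, ht, Pi.add_apply, Int.cast_add]
  simp [δ]

lemma coord_mul_inv_eq (g : UT m) (x : Fin n → ℤ) (q : Pears m) :
    t (e q) (malcevProd a x * g⁻¹) =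
      t (e q) (malcevProd a (fun j => if (e.symm j).IsLong then 0 else x j) * g⁻¹) +
        ∑ p with p.IsLong, (x (e p) : ℚ) * (((mat g * single p.1.1 p.1.2 (1 : ℤ) * mat g⁻¹ :
          Matrix (Fin m) (Fin m) ℤ) q.1.1 q.1.2 : ℤ) : ℚ) := by
  set v := malcevProd a (fun j => if (e.symm j).IsLong then x j else 0)
  have hconj : mat (g * v * g⁻¹) = 1 + mat g * longMat (x ∘ e) * mat g⁻¹ := by
    rw [map_mul, map_mul, mat_malcevProd_long e ha, mul_add, mul_one, add_mul, ← map_mul,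
      mul_inv_cancel, map_one]
  have hmem : mat g * longMat (x ∘ e) * mat g⁻¹ ∈ superdiagFrom ℤ m (m - m / 2) := by
    simpa using mul_mem_superdiagFrom (mul_mem_superdiagFrom (mat_mem_superdiagFrom_zero g)
      (longMat_mem_superdiagFrom (x ∘ e))) (mat_mem_superdiagFrom_zero g⁻¹)
  rw [malcevProd_eq_short_mul_long e he x, show ∀ u : UT m, u * v * g⁻¹ = u * g⁻¹ * (g * v * g⁻¹)
    by intro u; group, coord_mul_of_mem_superdiagFrom e he ha ht hsurj _ _ hconj hmem]
  congr 1
  simp only [longMat, Finset.mul_sum, Finset.sum_mul, Matrix.sum_apply, Int.cast_sum]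
  refine Finset.sum_congr rfl fun p _ => ?_
  rw [Function.comp_apply, show single p.1.1 p.1.2 (x (e p)) = x (e p) • single p.1.1 p.1.2 (1 : ℤ)
    by rw [smul_single, smul_eq_mul, mul_one], mul_smul_comm, smul_mul_assoc, Matrix.smul_apply,
    smul_eq_mul, Int.cast_mul]

end LongCoordinates

theorem linear_monomials_UT_general (m : ℕ)
    (n : ℕ) (hn : n = m * (m - 1) / 2)
    (pos : Pears m → Fin n)
    (hpos : ∀ p : Pears m, (pos p : ℕ) =
      (p.1.1 : ℕ) + ∑ ℓ ∈ Finset.Ico 1 ((p.1.2 : ℕ) - (p.1.1 : ℕ)), (m - ℓ))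
    (a : Fin n → ↥(UT m)) (ha : ∀ p : Pears m, a (pos p) = sUT p.1.1 p.1.2 p.2)
    (hmal : IsMalcevBasis a)
    (t : Fin n → ↥(UT m) → ℚ)
    (ht : ∀ (x : Fin n → ℤ) (k : Fin n), t k (malcevProd a x) = (x k : ℚ)) :
    ∀ (g : ↥(UT m)) (p : Pears m),
      ∃ P : MvPolynomial (Pears m) ℚ,
        (∀ h : ↥(UT m), t (pos p) (h * g⁻¹) =
          MvPolynomial.eval (fun p' : Pears m => t (pos p') h) P) ∧
        ∀ d ∈ P.support,
          (∃ p' : Pears m, d p' ≠ 0 ∧ m - m / 2 ≤ (p'.1.2 : ℕ) - (p'.1.1 : ℕ)) →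
          (d.sum fun _ e => e) = 1 := by
  intro g p
  obtain ⟨e, rfl⟩ : ∃ e : Pears m ≃ Fin n, ⇑e = pos :=
    ⟨Equiv.ofBijective pos (Pears.bijective_of_val_eq_malcevIndex hn hpos), rfl⟩
  have he (q : Pears m) : q.IsLong ↔ Pears.superdiagOffset m (m - m / 2) ≤ e q := by
    rw [hpos q]
    exact q.isLong_iff_le_malcevIndex
  obtain ⟨P₀, hP₀⟩ := exists_coord_mul_eq_eval e ha ht hmal.1.2 g⁻¹ p
  let coef (q : Pears m) : ℚ :=
    ((UT.mat g * Matrix.single q.1.1 q.1.2 (1 : ℤ) * UT.mat g⁻¹ : Matrix (Fin m) (Fin m) ℤ)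
      p.1.1 p.1.2 : ℚ)
  refine ⟨bind₁ (fun q => if q.IsLong then 0 else X q) P₀ + ∑ q with q.IsLong, C (coef q) * X q,
    fun h => ?_, fun d hd hlong => ?_⟩
  · obtain ⟨x, rfl⟩ := hmal.1.2 h
    rw [coord_mul_inv_eq e he ha ht hmal.1.2, hP₀, map_add, eval_bind₁]
    congr 1
    · congr 2
      funext q
      split_ifs with hq <;> simp [ht, hq]
    · simp [ht, coef, mul_comm]
  · exact degree_eq_one_of_mem_support_add (not_of_mem_vars_bind₁_ite _ P₀)
      (IsHomogeneous.sum _ _ _ fun q _ => isHomogeneous_C_mul_X _ q) hd hlong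

theorem linear_monomials_UT (m : ℕ) (hm : 2 ≤ m)
    (n : ℕ) (hn : n = m * (m - 1) / 2)
    (pos : Pears m → Fin n)
    (hpos : ∀ p : Pears m, (pos p : ℕ) =
      (p.1.1 : ℕ) + ∑ ℓ ∈ Finset.Ico 1 ((p.1.2 : ℕ) - (p.1.1 : ℕ)), (m - ℓ))
    (a : Fin n → ↥(UT m)) (ha : ∀ p : Pears m, a (pos p) = sUT p.1.1 p.1.2 p.2)
    (hmal : IsMalcevBasis a)
    (t : Fin n → ↥(UT m) → ℚ)
    (ht : ∀ (x : Fin n → ℤ) (k : Fin n), t k (malcevProd a x) = (x k : ℚ)) :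
    ∀ (g : ↥(UT m)) (p : Pears m),
      ∃ P : MvPolynomial (Pears m) ℚ,
        (∀ h : ↥(UT m), t (pos p) (h * g⁻¹) =
          MvPolynomial.eval (fun p' : Pears m => t (pos p') h) P) ∧
        ∀ d ∈ P.support,
          (∃ p' : Pears m, d p' ≠ 0 ∧ m - m / 2 ≤ (p'.1.2 : ℕ) - (p'.1.1 : ℕ)) →
          (d.sum fun _ e => e) = 1 :=
  linear_monomials_UT_general m n hn pos hpos a ha hmal t ht
end
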